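/- Let $\pi$ be a finite group with a homomorphism $w\colon\pi\to\{\pm 1\}$. Suppose there is $g\in\pi$ with $g^2=1$, $g\neq 1$, and $w(g)=-1$. If $\Gamma(\mathbbm{Z}\pi)$ contains $\mathbbm{Z}\pi/\mathbbm{Z}\pi(1-g)$ as a $\mathbbm{Z}\pi$-module direct summand, then $\Tors(\mathbbm{Z}^w\otimes_{\mathbbm{Z}\pi}\Gamma(\mathbbm{Z}\pi))\neq 0$; more precisely $\mathbbm{Z}^w\otimes_{\mathbbm{Z}\pi}(\mathbbm{Z}\pi/\mathbbm{Z}\pi(1-g))\cong\mathbbm{Z}/2$. -/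

import Mathlib

/-!
For any ring `R`, right `R`-module `C` and `a ∈ R`, the map `c ⊗ [r] ↦ [c r]` identifies
`C ⊗_R R/Ra` with `C/Ca`. For `C = ℤ^w` and `a = 1 - g` the right action of `a` is
multiplication by `1 - w(g) = 2`, so `ℤ^w ⊗_{ℤπ} ℤπ/ℤπ(1-g) ≅ ℤ/2`. Tensoring preserves
retracts, so a direct summand `ℤπ/ℤπ(1-g)` of `Γ(ℤπ)` makes this copy of `ℤ/2` inject into
`ℤ^w ⊗_{ℤπ} Γ(ℤπ)`, whose torsion is therefore nonzero.
-/

/-- The relations defining Whitehead's quadratic functor `Γ(A)`. -/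
def GammaRel (A : Type*) [AddCommGroup A] : AddSubgroup (FreeAbelianGroup A) :=
  AddSubgroup.closure
    ({x | ∃ a : A, x = FreeAbelianGroup.of (-a) - FreeAbelianGroup.of a} ∪
     {x | ∃ a b c : A,
        x = FreeAbelianGroup.of (a + b + c) - FreeAbelianGroup.of (a + b)
            - FreeAbelianGroup.of (b + c) - FreeAbelianGroup.of (c + a)
            + FreeAbelianGroup.of a + FreeAbelianGroup.of b + FreeAbelianGroup.of c})

/-- Whitehead's quadratic functor `Γ(A)` of an abelian group `A`. -/
def Gamma (A : Type*) [AddCommGroup A] : Type _ :=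
  FreeAbelianGroup A ⧸ GammaRel A

instance (A : Type*) [AddCommGroup A] : AddCommGroup (Gamma A) :=
  QuotientAddGroup.Quotient.addCommGroup (GammaRel A)

/-- The universal quadratic map `v : A → Γ(A)`. -/
def Gamma.v {A : Type*} [AddCommGroup A] (a : A) : Gamma A :=
  QuotientAddGroup.mk (FreeAbelianGroup.of a)

/-- Functoriality of `Γ` in additive maps. -/
def Gamma.map {A B : Type*} [AddCommGroup A] [AddCommGroup B] (f : A →+ B) :
    Gamma A →+ Gamma B :=
  QuotientAddGroup.map _ _
    (FreeAbelianGroup.lift fun a => FreeAbelianGroup.of (f a))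
    (by
      refine (AddSubgroup.closure_le _).2 ?_
      rintro x (⟨a, rfl⟩ | ⟨a, b, c, rfl⟩) <;>
        refine AddSubgroup.mem_comap.2 ?_
      · have : (FreeAbelianGroup.lift fun a => FreeAbelianGroup.of (f a))
            (FreeAbelianGroup.of (-a) - FreeAbelianGroup.of a)
            = FreeAbelianGroup.of (-(f a)) - FreeAbelianGroup.of (f a) := by
          rw [map_sub, FreeAbelianGroup.lift_apply_of, FreeAbelianGroup.lift_apply_of, map_neg]
        rw [this]
        exact AddSubgroup.subset_closure (Or.inl ⟨f a, rfl⟩)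
      · have : (FreeAbelianGroup.lift fun a => FreeAbelianGroup.of (f a))
            (FreeAbelianGroup.of (a + b + c) - FreeAbelianGroup.of (a + b)
              - FreeAbelianGroup.of (b + c) - FreeAbelianGroup.of (c + a)
              + FreeAbelianGroup.of a + FreeAbelianGroup.of b + FreeAbelianGroup.of c)
            = FreeAbelianGroup.of (f a + f b + f c) - FreeAbelianGroup.of (f a + f b)
              - FreeAbelianGroup.of (f b + f c) - FreeAbelianGroup.of (f c + f a)
              + FreeAbelianGroup.of (f a) + FreeAbelianGroup.of (f b)
              + FreeAbelianGroup.of (f c) := by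
          simp only [map_sub, map_add, FreeAbelianGroup.lift_apply_of]
        rw [this]
        exact AddSubgroup.subset_closure (Or.inr ⟨f a, f b, f c, rfl⟩))

lemma Gamma.map_mk {A B : Type*} [AddCommGroup A] [AddCommGroup B] (f : A →+ B)
    (y : FreeAbelianGroup A) :
    Gamma.map f (QuotientAddGroup.mk y) =
      QuotientAddGroup.mk (FreeAbelianGroup.lift (fun a => FreeAbelianGroup.of (f a)) y) :=
  rfl

/-- The action of `π` on `Γ(ℤπ)` induced by functoriality of `Γ` from left
multiplication by group elements, as a representation of `π` over `ℤ`. -/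
noncomputable def gammaRep (π : Type*) [Group π] :
    Representation ℤ π (Gamma (MonoidAlgebra ℤ π)) where
  toFun g :=
    (Gamma.map (AddMonoidHom.mulLeft (MonoidAlgebra.single g 1))).toIntLinearMap
  map_one' := by
    ext x
    refine QuotientAddGroup.induction_on x ?_
    intro y
    show Gamma.map _ (QuotientAddGroup.mk y) = QuotientAddGroup.mk y
    rw [Gamma.map_mk]
    congr 1
    refine FreeAbelianGroup.induction_on y ?_ ?_ ?_ ?_
    · simp
    · intro a
      rw [FreeAbelianGroup.lift_apply_of]
      congr 1
      show MonoidAlgebra.single 1 1 * a = a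
      rw [← MonoidAlgebra.one_def, one_mul]
    · intro a ha
      rw [map_neg, ha]
    · intro a b ha hb
      rw [map_add, ha, hb]
  map_mul' := by
    intro g h
    ext x
    refine QuotientAddGroup.induction_on x ?_
    intro y
    show Gamma.map _ (QuotientAddGroup.mk y)
      = Gamma.map _ (Gamma.map _ (QuotientAddGroup.mk y))
    rw [Gamma.map_mk, Gamma.map_mk, Gamma.map_mk]
    congr 1
    refine FreeAbelianGroup.induction_on y ?_ ?_ ?_ ?_
    · simp
    · intro a
      rw [FreeAbelianGroup.lift_apply_of, FreeAbelianGroup.lift_apply_of, FreeAbelianGroup.lift_apply_of]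
      congr 1
      show MonoidAlgebra.single (g * h) 1 * a
        = MonoidAlgebra.single g 1 * (MonoidAlgebra.single h 1 * a)
      rw [← mul_assoc, MonoidAlgebra.single_mul_single, one_mul]
    · intro a ha
      simp only [map_neg, ha]
    · intro a b ha hb
      simp only [map_add, ha, hb]

/-- `Γ(ℤπ)` as a left module over the group ring `ℤπ`. -/
noncomputable abbrev GammaModule (π : Type*) [Group π] : Type _ :=
  (gammaRep π).asModule

open MonoidAlgebra TensorProduct

section
variable (π : Type*) [Group π] (w : π →* ℤˣ)

/-- The ring homomorphism `ℤπ → ℤ` induced by `w`. -/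
noncomputable def epsW : MonoidAlgebra ℤ π →+* ℤ :=
  ((MonoidAlgebra.lift ℤ ℤ π) ((Units.coeHom ℤ).comp w)).toRingHom

/-- `ℤ^w`: the abelian group `ℤ`, viewed as a module over the group ring `ℤπ`
(on either side) via `g · z = w(g) z`. -/
def Zw (π : Type*) [Group π] (w : π →* ℤˣ) : Type := ℤ

instance : AddCommGroup (Zw π w) := inferInstanceAs (AddCommGroup ℤ)

/-- `ℤ^w` as a left `ℤπ`-module. -/
noncomputable instance : Module (MonoidAlgebra ℤ π) (Zw π w) :=
  Module.compHom ℤ (epsW π w)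

/-- `ℤ^w` as a right `ℤπ`-module. -/
noncomputable instance : Module (MonoidAlgebra ℤ π)ᵐᵒᵖ (Zw π w) :=
  Module.compHom ℤ (RingHom.fromOpposite (epsW π w) (fun _ _ => mul_comm _ _))

/-- The identity identification of `ℤ^w` with `ℤ`. -/
def Zw.toInt (z : Zw π w) : ℤ := z

end

section
variable (R : Type*) [Ring R]
variable (C : Type*) [AddCommGroup C] [Module Rᵐᵒᵖ C]
variable (M : Type*) [AddCommGroup M] [Module R M]

/-- The subgroup of relations `(c·r) ⊗ m - c ⊗ (r·m)` defining the tensor product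
of a right `R`-module `C` and a left `R`-module `M` over `R`. -/
noncomputable def moduleTensorRel : AddSubgroup (C ⊗[ℤ] M) :=
  AddSubgroup.closure
    {x | ∃ (c : C) (r : R) (m : M),
      x = (MulOpposite.op r • c) ⊗ₜ[ℤ] m - c ⊗ₜ[ℤ] (r • m)}

/-- The tensor product `C ⊗_R M` of a right `R`-module `C` and a left `R`-module `M`
over a (possibly noncommutative) ring `R`, as an abelian group. -/
noncomputable def ModuleTensor : Type _ :=
  (C ⊗[ℤ] M) ⧸ moduleTensorRel R C M

noncomputable instance : AddCommGroup (ModuleTensor R C M) :=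
  QuotientAddGroup.Quotient.addCommGroup _

end

theorem AddCommGroup.torsion_ne_bot_of_injective {A B : Type*} [AddCommGroup A] [AddCommGroup B]
    {φ : A →+ B} (hφ : Function.Injective φ) (h : AddCommGroup.torsion A ≠ ⊥) :
    AddCommGroup.torsion B ≠ ⊥ := by
  rw [← AddSubgroup.nontrivial_iff_ne_bot, AddSubgroup.nontrivial_iff_exists_ne_zero] at h ⊢
  obtain ⟨x, hx, hx0⟩ := h
  exact ⟨φ x, hφ.isOfFinAddOrder_iff.2 hx, (map_ne_zero_iff φ hφ).2 hx0⟩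

noncomputable section

namespace ModuleTensor

variable (R : Type*) [Ring R] {C : Type*} [AddCommGroup C] [Module Rᵐᵒᵖ C]
  {M : Type*} [AddCommGroup M] [Module R M] {M' : Type*} [AddCommGroup M'] [Module R M']

def tmul (c : C) (m : M) : ModuleTensor R C M :=
  QuotientAddGroup.mk (c ⊗ₜ[ℤ] m)

variable (C M) in
def tmulHom : C →+ M →+ ModuleTensor R C M :=
  AddMonoidHom.mk'
    (fun c => AddMonoidHom.mk' (tmul R c) fun m m' =>
      congrArg QuotientAddGroup.mk (TensorProduct.tmul_add c m m'))
    fun c c' => AddMonoidHom.ext fun m =>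
      congrArg QuotientAddGroup.mk (TensorProduct.add_tmul c c' m)

@[simp]
theorem tmulHom_apply (c : C) (m : M) : tmulHom R C M c m = tmul R c m :=
  rfl

@[simp]
theorem tmul_zero (c : C) : tmul R c (0 : M) = 0 :=
  map_zero (tmulHom R C M c)

variable {R}

theorem op_smul_tmul (c : C) (r : R) (m : M) :
    tmul R (MulOpposite.op r • c) m = tmul R c (r • m) :=
  QuotientAddGroup.eq_iff_sub_mem.2 (AddSubgroup.subset_closure ⟨c, r, m, rfl⟩)

@[elab_as_elim]
theorem induction_on {P : ModuleTensor R C M → Prop} (x : ModuleTensor R C M) (zero : P 0)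
    (tmul : ∀ c m, P (tmul R c m)) (add : ∀ x y, P x → P y → P (x + y)) : P x := by
  induction x using QuotientAddGroup.induction_on with | H y => ?_
  induction y using TensorProduct.induction_on with
  | zero => exact zero
  | tmul c m => exact tmul c m
  | add y y' hy hy' => exact add _ _ hy hy'

variable {A : Type*} [AddCommGroup A]

def lift (f : C →+ M →+ A)
    (hf : ∀ (c : C) (r : R) (m : M), f (MulOpposite.op r • c) m = f c (r • m)) :
    ModuleTensor R C M →+ A :=
  QuotientAddGroup.lift _
    (TensorProduct.liftAddHom f fun n c m => by
      simp only [map_zsmul, AddMonoidHom.coe_smul, Pi.smul_apply])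
    ((AddSubgroup.closure_le _).2 <| by
      rintro _ ⟨c, r, m, rfl⟩
      simp [hf])

@[simp]
theorem lift_tmul (f : C →+ M →+ A) (hf) (c : C) (m : M) :
    lift (R := R) f hf (tmul R c m) = f c m :=
  rfl

def map (h : M →ₗ[R] M') : ModuleTensor R C M →+ ModuleTensor R C M' :=
  lift ((tmulHom R C M').compl₂ h.toAddMonoidHom) fun c r m => by
    simp [op_smul_tmul]

@[simp]
theorem map_tmul (h : M →ₗ[R] M') (c : C) (m : M) : map h (tmul R c m) = tmul R c (h m) :=
  rfl

theorem map_leftInverse {f : M' →ₗ[R] M} {s : M →ₗ[R] M'} (hfs : Function.LeftInverse f s) :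
    Function.LeftInverse (map (C := C) f) (map s) := fun x => by
  induction x using induction_on with
  | zero => simp only [map_zero]
  | tmul c m => simp only [map_tmul, hfs m]
  | add x y hx hy => simp only [map_add, hx, hy]

theorem exists_injective_of_isCompl {N P : Submodule R M'} (hNP : IsCompl N P)
    (e : N ≃ₗ[R] M) : ∃ φ : ModuleTensor R C M →+ ModuleTensor R C M', Function.Injective φ :=
  ⟨map (N.subtype ∘ₗ e.symm.toLinearMap),
    (map_leftInverse (f := e.toLinearMap ∘ₗ N.projectionOnto P hNP) fun m => by
      simp).injective⟩

section QuotSpanSingleton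

open MulOpposite

variable (C) (a : R)

def opSMulQuot (c : C) :
    R ⧸ Submodule.span R {a} →+ C ⧸ (DistribSMul.toAddMonoidHom C (op a)).range :=
  QuotientAddGroup.lift (Submodule.span R {a}).toAddSubgroup
    ((QuotientAddGroup.mk' _).comp (((smulAddHom Rᵐᵒᵖ C).flip c).comp opAddEquiv.toAddMonoidHom))
    fun r hr => by
      obtain ⟨s, rfl⟩ := Submodule.mem_span_singleton.1 hr
      simp [mul_smul]

@[simp]
theorem opSMulQuot_mk (c : C) (r : R) :
    opSMulQuot C a c (Submodule.Quotient.mk r) = QuotientAddGroup.mk (op r • c) :=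
  rfl

def quotSpanSingletonEquiv :
    ModuleTensor R C (R ⧸ Submodule.span R {a}) ≃+
      C ⧸ (DistribSMul.toAddMonoidHom C (op a)).range where
  toFun := lift (AddMonoidHom.mk' (opSMulQuot C a) fun c c' => by
      ext m
      induction m using Submodule.Quotient.induction_on
      simp [smul_add]) fun c r m => by
    induction m using Submodule.Quotient.induction_on
    simp [← Submodule.Quotient.mk_smul, mul_smul]
  invFun := QuotientAddGroup.lift _ ((tmulHom R C _).flip (Submodule.Quotient.mk 1)) (by
    rintro _ ⟨c, rfl⟩
    simp [op_smul_tmul, ← Submodule.Quotient.mk_smul,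
      (Submodule.Quotient.mk_eq_zero _).2 (Submodule.mem_span_singleton_self a)])
  left_inv x := by
    induction x using induction_on with
    | zero => simp only [map_zero]
    | tmul c m =>
      induction m using Submodule.Quotient.induction_on
      simp [op_smul_tmul, ← Submodule.Quotient.mk_smul]
    | add x y hx hy => simp only [map_add, hx, hy]
  right_inv x := by
    induction x using QuotientAddGroup.induction_on with | H c => simp
  map_add' := map_add _

end QuotSpanSingleton

end ModuleTensor

section Twisted

open MulOpposite

variable {π : Type*} [Group π] (w : π →* ℤˣ)

theorem epsW_one_sub_single {g : π} (hwg : w g = -1) :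
    epsW π w (1 - single g 1) = 2 := by
  simp [epsW, hwg]

def Zw.quotRangeOpSMulEquiv (a : MonoidAlgebra ℤ π) :
    Zw π w ⧸ (DistribSMul.toAddMonoidHom (Zw π w) (op a)).range ≃+
      ℤ ⧸ AddSubgroup.zmultiples (epsW π w a) :=
  -- `ℤ^w` is `ℤ` itself, on which `a` acts from the right by multiplication with `ε a`.
  QuotientAddGroup.congr _ _ (AddEquiv.refl ℤ) <| by
    ext n
    simp only [AddSubgroup.mem_map, AddMonoidHom.mem_range, DistribSMul.toAddMonoidHom_apply,
      exists_exists_eq_and, AddSubgroup.mem_zmultiples_iff, smul_eq_mul]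
    exact ⟨fun ⟨z, hz⟩ => ⟨z, hz ▸ mul_comm _ _⟩, fun ⟨k, hk⟩ => ⟨k, hk ▸ mul_comm _ _⟩⟩

def tensorQuotOneSubEquivZModTwo {g : π} (hwg : w g = -1) :
    ModuleTensor (MonoidAlgebra ℤ π) (Zw π w)
        (MonoidAlgebra ℤ π ⧸ Submodule.span (MonoidAlgebra ℤ π) {1 - single g (1 : ℤ)}) ≃+
      ZMod 2 :=
  (ModuleTensor.quotSpanSingletonEquiv _ _).trans <| (Zw.quotRangeOpSMulEquiv w _).trans <|
    (QuotientAddGroup.quotientAddEquivOfEq (by rw [epsW_one_sub_single w hwg]; rfl)).trans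
      (Int.quotientZMultiplesNatEquivZMod 2)

end Twisted

end

theorem torsion_nonzero_of_summand_general
    (π : Type) [Group π] (w : π →* ℤˣ)
    (g : π) (hwg : w g = -1)
    (hsummand :
      ∃ N P : Submodule (MonoidAlgebra ℤ π) (GammaModule π),
        IsCompl N P ∧
        Nonempty (N ≃ₗ[MonoidAlgebra ℤ π]
          (MonoidAlgebra ℤ π ⧸
            Submodule.span (MonoidAlgebra ℤ π) {1 - MonoidAlgebra.single g (1 : ℤ)})) ) :
    Nonempty
      (ModuleTensor (MonoidAlgebra ℤ π) (Zw π w)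
          (MonoidAlgebra ℤ π ⧸
            Submodule.span (MonoidAlgebra ℤ π) {1 - MonoidAlgebra.single g (1 : ℤ)})
        ≃+ ZMod 2) ∧
    AddCommGroup.torsion
        (ModuleTensor (MonoidAlgebra ℤ π) (Zw π w) (GammaModule π)) ≠ ⊥ := by
  obtain ⟨N, P, hNP, ⟨e⟩⟩ := hsummand
  let E := tensorQuotOneSubEquivZModTwo w hwg
  obtain ⟨φ, hφ⟩ := ModuleTensor.exists_injective_of_isCompl (C := Zw π w) hNP e
  refine ⟨⟨E⟩, AddCommGroup.torsion_ne_bot_of_injective (φ := φ.comp E.symm.toAddMonoidHom)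
    (hφ.comp E.symm.injective) ?_⟩
  rw [← AddSubgroup.nontrivial_iff_ne_bot, AddSubgroup.nontrivial_iff_exists_ne_zero]
  exact ⟨1, isOfFinAddOrder_of_finite 1, one_ne_zero⟩

/-- Let `π` be a finite group with a homomorphism `w : π → {±1}`.
Suppose there is `g ∈ π` with `g² = 1`, `g ≠ 1` and `w g = -1`.  If `Γ(ℤπ)` contains
`ℤπ/ℤπ(1-g)` as a `ℤπ`-module direct summand, then the torsion subgroup of
`ℤ^w ⊗_{ℤπ} Γ(ℤπ)` is nonzero; more precisely
`ℤ^w ⊗_{ℤπ} (ℤπ/ℤπ(1-g)) ≅ ℤ/2`. -/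
theorem torsion_nonzero_of_summand
    (π : Type) [Group π] [Fintype π] (w : π →* ℤˣ)
    (g : π) (hg2 : g ^ 2 = 1) (hg1 : g ≠ 1) (hwg : w g = -1)
    (hsummand :
      ∃ N P : Submodule (MonoidAlgebra ℤ π) (GammaModule π),
        IsCompl N P ∧
        Nonempty (N ≃ₗ[MonoidAlgebra ℤ π]
          (MonoidAlgebra ℤ π ⧸
            Submodule.span (MonoidAlgebra ℤ π) {1 - MonoidAlgebra.single g (1 : ℤ)})) ) :
    Nonempty
      (ModuleTensor (MonoidAlgebra ℤ π) (Zw π w)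
          (MonoidAlgebra ℤ π ⧸
            Submodule.span (MonoidAlgebra ℤ π) {1 - MonoidAlgebra.single g (1 : ℤ)})
        ≃+ ZMod 2) ∧
    AddCommGroup.torsion
        (ModuleTensor (MonoidAlgebra ℤ π) (Zw π w) (GammaModule π)) ≠ ⊥ :=
  torsion_nonzero_of_summand_general π w g hwg hsummand
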